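/- For every integer r ≥ 7 and every real λ with −1/(2^{r−1}−1) ≤ λ < 0, one has f_r(λ) ≥ ((2^{r−1}−1)/2)·λ², and consequently f_r(λ) > r(r−1)·λ²·log 2. -/

import Mathlib

/-- Binary KL divergence `d_KL(x‖y)` (with the convention `0·log 0 = 0`,
which holds automatically since `Real.log 0 = 0`). -/
noncomputable def klBin (x y : ℝ) : ℝ :=
  x * Real.log (x / y) + (1 - x) * Real.log ((1 - x) / (1 - y))

/-- `f_r(λ) = d_KL(λ + (1−λ)/2^{r−1} ‖ 1/2^{r−1})`. -/
noncomputable def fHSBM (r : ℕ) (l : ℝ) : ℝ :=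
  klBin (l + (1 - l) / 2 ^ (r - 1)) (1 / 2 ^ (r - 1))


-- derivative inequality: log x - log p - log(1-x) + log(1-p) + (p-x)/(p(1-p)) ≤ 0
lemma phi_nonpos (p : ℝ) (hp : 0 < p) (hp2 : p ≤ 1/2) {x : ℝ} (hx : 0 < x) (hxp : x ≤ p) :
    Real.log x - Real.log p - Real.log (1-x) + Real.log (1-p) + (p - x)/(p*(1-p)) ≤ 0 := by
  have h1p : 0 < 1 - p := by linarith
  set φ : ℝ → ℝ := fun s => Real.log (1-s) - Real.log (1-p) - Real.log s + Real.log p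
      - (p - s)/(p*(1-p)) with hφ
  have hder : ∀ s ∈ Set.Icc x p, HasDerivAt φ (-(1-s)⁻¹ - s⁻¹ + 1/(p*(1-p))) s := by
    intro s hs
    obtain ⟨hs1, hs2⟩ := hs
    have hs0 : 0 < s := lt_of_lt_of_le hx hs1
    have hs1' : s < 1 := by linarith
    have d1 : HasDerivAt (fun s : ℝ => Real.log (1 - s)) (-(1-s)⁻¹) s := by
      have := (Real.hasDerivAt_log (by linarith : (1:ℝ) - s ≠ 0)).comp s
        ((hasDerivAt_const s (1:ℝ)).sub (hasDerivAt_id s))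
      simpa [Function.comp_def] using this
    have d2 : HasDerivAt (fun s : ℝ => Real.log s) s⁻¹ s := Real.hasDerivAt_log hs0.ne'
    have d3 : HasDerivAt (fun s : ℝ => (p - s)/(p*(1-p))) (-1/(p*(1-p))) s := by
      have := ((hasDerivAt_const s p).sub (hasDerivAt_id s)).div_const (p*(1-p))
      simpa using this
    have := (((d1.sub_const (Real.log (1-p))).sub d2).add_const (Real.log p)).sub d3
    refine this.congr_deriv ?_
    ring
  have hmono : AntitoneOn φ (Set.Icc x p) := by
    apply antitoneOn_of_deriv_nonpos (convex_Icc x p)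
    · exact fun s hs => ((hder s hs).differentiableAt).continuousAt.continuousWithinAt
    · intro s hs
      rw [interior_Icc] at hs
      exact ((hder s (Set.mem_Icc_of_Ioo hs)).differentiableAt).differentiableWithinAt
    · intro s hs
      rw [interior_Icc] at hs
      rw [(hder s (Set.mem_Icc_of_Ioo hs)).deriv]
      have hs0 : 0 < s := lt_trans hx hs.1
      have hs1' : s < 1 := by linarith [hs.2]
      have hpos : 0 < s * (1 - s) := mul_pos hs0 (by linarith)
      have hppos : 0 < p * (1 - p) := by positivity
      have key : s * (1 - s) ≤ p * (1 - p) := by nlinarith [hs.2]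
      have h2 : 1/(p*(1-p)) ≤ 1/(s*(1-s)) := one_div_le_one_div_of_le hpos key
      have h3 : 1/(s*(1-s)) = s⁻¹ + (1-s)⁻¹ := by 
        have hs0' : s ≠ 0 := hs0.ne'
        have hs1'' : (1:ℝ) - s ≠ 0 := by linarith
        field_simp
        ring
      linarith
  have h := hmono (Set.left_mem_Icc.2 hxp) (Set.right_mem_Icc.2 hxp) hxp
  have hφp : φ p = 0 := by simp [hφ]
  rw [hφp] at h
  simp only [hφ] at h
  linarith
lemma klBin_ge (p x : ℝ) (hp : 0 < p) (hp2 : p ≤ 1/2) (hx : 0 ≤ x) (hxp : x ≤ p) :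
    klBin x p ≥ (p - x)^2 / (2*p*(1-p)) := by
  have h1p : 0 < 1 - p := by linarith
  rcases eq_or_lt_of_le hx with h0 | h0
  · -- x = 0
    subst h0
    have hlog : Real.log (1 - p) ≤ -p := by
      have := Real.log_le_sub_one_of_pos h1p
      linarith
    have hkl : klBin 0 p = -Real.log (1 - p) := by
      simp [klBin, Real.log_div one_ne_zero h1p.ne']
    rw [hkl]
    rw [ge_iff_le, div_le_iff₀ (by positivity : (0:ℝ) < 2*p*(1-p))]
    have h5 : p * (2*p*(1-p)) ≤ (-Real.log (1-p)) * (2*p*(1-p)) :=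
      mul_le_mul_of_nonneg_right (by linarith) (by positivity)
    nlinarith
  · -- 0 < x
    set F : ℝ → ℝ := fun t => (t * Real.log t - t * Real.log p)
        + ((1-t) * Real.log (1-t) - (1-t) * Real.log (1-p)) - (p - t)^2/(2*p*(1-p)) with hF
    have hder : ∀ t ∈ Set.Icc x p, HasDerivAt F
        (Real.log t - Real.log p - Real.log (1-t) + Real.log (1-p) + (p-t)/(p*(1-p))) t := by
      intro t ht
      obtain ⟨ht1, ht2⟩ := ht
      have ht0 : 0 < t := lt_of_lt_of_le h0 ht1
      have ht1' : t < 1 := by linarith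
      have d1 : HasDerivAt (fun t : ℝ => t * Real.log t) (Real.log t + 1) t :=
        Real.hasDerivAt_mul_log ht0.ne'
      have d2 : HasDerivAt (fun t : ℝ => t * Real.log p) (Real.log p) t := by
        simpa using (hasDerivAt_id t).mul_const (Real.log p)
      have d3 : HasDerivAt (fun t : ℝ => (1-t) * Real.log (1-t)) (-(Real.log (1-t) + 1)) t := by
        have := (Real.hasDerivAt_mul_log (by linarith : (1:ℝ) - t ≠ 0)).comp t
          ((hasDerivAt_const t (1:ℝ)).sub (hasDerivAt_id t))
        simpa [Function.comp_def] using this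
      have d4 : HasDerivAt (fun t : ℝ => (1-t) * Real.log (1-p)) (-Real.log (1-p)) t := by
        have := ((hasDerivAt_const t (1:ℝ)).sub (hasDerivAt_id t)).mul_const (Real.log (1-p))
        simpa using this
      have d5 : HasDerivAt (fun t : ℝ => (p - t)^2/(2*p*(1-p))) (-(2*(p-t))/(2*p*(1-p))) t := by
        have := (((hasDerivAt_const t p).sub (hasDerivAt_id t)).pow 2).div_const (2*p*(1-p))
        refine this.congr_deriv ?_
        simp
      have := ((d1.sub d2).add (d3.sub d4)).sub d5
      refine this.congr_deriv ?_
      have hpp : p*(1-p) ≠ 0 := by positivity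
      field_simp
      ring
    have hmono : AntitoneOn F (Set.Icc x p) := by
      apply antitoneOn_of_deriv_nonpos (convex_Icc x p)
      · exact fun t ht => ((hder t ht).differentiableAt).continuousAt.continuousWithinAt
      · intro t ht
        rw [interior_Icc] at ht
        exact ((hder t (Set.mem_Icc_of_Ioo ht)).differentiableAt).differentiableWithinAt
      · intro t ht
        rw [interior_Icc] at ht
        rw [(hder t (Set.mem_Icc_of_Ioo ht)).deriv]
        exact phi_nonpos p hp hp2 (lt_trans h0 ht.1) (le_of_lt ht.2)
    have h := hmono (Set.left_mem_Icc.2 hxp) (Set.right_mem_Icc.2 hxp) hxp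
    have hFp : F p = 0 := by simp [hF]
    rw [hFp] at h
    -- F x = klBin x p - (p-x)^2/(2p(1-p))
    have hx1 : (1:ℝ) - x > 0 := by linarith
    have hFx : F x = klBin x p - (p - x)^2/(2*p*(1-p)) := by
      simp only [hF, klBin]
      rw [Real.log_div h0.ne' hp.ne', Real.log_div hx1.ne' h1p.ne']
      ring
    rw [hFx] at h
    linarith

lemma two_pow_gt (n : ℕ) (hn : 6 ≤ n) : 1.3862943616*(n+1)*n + 1 < (2:ℝ)^n := by
  induction n, hn using Nat.le_induction with
  | base => norm_num
  | succ n hn ih =>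
    have hn' : (6:ℝ) ≤ n := by exact_mod_cast hn
    push_cast
    push_cast at ih
    rw [pow_succ]
    nlinarith

theorem fHSBM_neg_bound (r : ℕ) (hr : 7 ≤ r) (l : ℝ)
    (hl : -(1 / (2 ^ (r - 1) - 1)) ≤ l) (hl0 : l < 0) :
    fHSBM r l ≥ ((2 ^ (r - 1) - 1) / 2) * l ^ 2 ∧
    fHSBM r l > (r : ℝ) * ((r : ℝ) - 1) * l ^ 2 * Real.log 2 := by
  obtain ⟨n, rfl⟩ : ∃ n, r = n + 1 := ⟨r - 1, by omega⟩
  have hn : 6 ≤ n := by omega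
  simp only [Nat.add_sub_cancel] at hl ⊢
  set N : ℝ := 2^n with hN
  have hN64 : (64:ℝ) ≤ N := by
    calc (64:ℝ) = 2^6 := by norm_num
    _ ≤ 2^n := by exact pow_le_pow_right₀ (by norm_num) hn
  have hN0 : (0:ℝ) < N := by linarith
  have hN1 : (0:ℝ) < N - 1 := by linarith
  set x := l + (1 - l)/N with hx
  have hlN : -1 ≤ l * (N - 1) := by
    have h := mul_le_mul_of_nonneg_right hl (le_of_lt hN1)
    rwa [neg_mul, div_mul_cancel₀ _ hN1.ne'] at h
  have hx0 : 0 ≤ x := by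
    have : 0 ≤ (l*(N-1) + 1)/N := div_nonneg (by linarith) hN0.le
    have hxeq : x = (l*(N-1) + 1)/N := by
      rw [hx]
      field_simp
      ring
    linarith [hxeq ▸ this]
  have hxp : x ≤ 1/N := by
    rw [hx, ← sub_nonneg]
    have : 1/N - (l + (1-l)/N) = (-l)*(N-1)/N := by field_simp; ring
    rw [this]
    exact div_nonneg (mul_nonneg (by linarith) hN1.le) hN0.le
  have key := klBin_ge (1/N) x (by positivity) (by
      rw [div_le_div_iff₀ hN0 (by norm_num : (0:ℝ) < 2)]; linarith) hx0 hxp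
  have hrhs : (1/N - x)^2 / (2*(1/N)*(1-1/N)) = ((N-1)/2) * l^2 := by
    rw [hx]
    have h2 : (2:ℝ)*(1/N)*(1-1/N) = 2*(N-1)/N^2 := by field_simp
    rw [h2]
    field_simp
    ring
  have hf : fHSBM (n+1) l = klBin x (1/N) := by
    simp only [fHSBM, Nat.add_sub_cancel, hx, hN]
  have part1 : fHSBM (n+1) l ≥ ((N - 1) / 2) * l ^ 2 := by
    rw [hf]
    calc klBin x (1/N) ≥ (1/N - x)^2 / (2*(1/N)*(1-1/N)) := key
    _ = ((N-1)/2) * l^2 := hrhs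
  refine ⟨part1, ?_⟩
  have hl2 : 0 < l^2 := by nlinarith
  have hlog2 : Real.log 2 < 0.6931471808 := Real.log_two_lt_d9
  have hlog2' : 0 < Real.log 2 := Real.log_pos one_lt_two
  have hpow := two_pow_gt n hn
  have hcast : ((n:ℝ)+1) * ((n:ℝ)+1-1) = ((n:ℝ)+1)*n := by ring
  push_cast
  have hstep : ((n:ℝ)+1) * ((n:ℝ)+1-1) * l^2 * Real.log 2 < ((N-1)/2) * l^2 := by
    rw [hcast]
    have hn0 : (0:ℝ) ≤ ((n:ℝ)+1)*n := by positivity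
    nlinarith [mul_pos hl2 hlog2', mul_le_mul_of_nonneg_left hlog2.le hn0]
  linarith
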